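/- arXiv:2111.04058 — 5 statements merged into one kernel-verified Lean document; each statement's English description precedes it below -/
import Mathlib

section
/- Let R be a ring and M a self-injective R-module. Then the Jacobson radical of End_R(M) equals the set of endomorphisms f : M → M whose kernel is an essential submodule of M. -/
/-- if `M` is self-injective, then the Jacobson radical of `End_R(M)`
is exactly the set of endomorphisms with essential kernel. -/
theorem stmt9 {R : Type*} [Ring R] {M : Type*} [AddCommGroup M] [Module R M]
    (hinj : ∀ (K : Submodule R M) (g : K →ₗ[R] M),
        ∃ h : Module.End R M, ∀ x : K, h x = g x) :
    ∀ f : Module.End R M,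
      (∀ g : Module.End R M, IsUnit (1 - g * f)) ↔
      (∀ K : Submodule R M, LinearMap.ker f ⊓ K = ⊥ → K = ⊥) := by
  intro f
  constructor
  · -- quasi-regular ⇒ essential kernel
    intro hu K hK
    set φ : K →ₗ[R] M := f ∘ₗ K.subtype with hφdef
    have hφ : Function.Injective φ := by
      intro x y hxy
      have hmem : ((x - y : K) : M) ∈ LinearMap.ker f ⊓ K := by
        refine ⟨?_, (x - y).2⟩
        have hfx : f (x : M) = f (y : M) := hxy
        simp [LinearMap.mem_ker, map_sub, hfx]
      rw [hK] at hmem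
      have hz : (x - y : K) = 0 := Subtype.ext (by simpa using hmem)
      exact sub_eq_zero.mp hz
    set e := LinearEquiv.ofInjective φ hφ with he
    obtain ⟨h, hh⟩ := hinj (LinearMap.range φ) (K.subtype ∘ₗ e.symm.toLinearMap)
    have key : ∀ x : K, h (f x) = x := by
      intro x
      have hm : f (x : M) ∈ LinearMap.range φ := ⟨x, rfl⟩
      have h1 := hh ⟨f x, hm⟩
      have h2 : e.symm ⟨f x, hm⟩ = x := by
        rw [LinearEquiv.symm_apply_eq]
        exact Subtype.ext (by simp [he, φ])
      simpa [h2] using h1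
    obtain ⟨v, hv⟩ := (hu h).exists_left_inv
    -- K ≤ ker (1 - h*f) = ⊥
    rw [eq_bot_iff]
    intro x hx
    have hx0 : (1 - h * f) x = 0 := by
      simp [LinearMap.sub_apply, key ⟨x, hx⟩]
    have : x = v ((1 - h * f) x) := by
      have := congrArg (fun u : Module.End R M => u x) hv
      simpa using this.symm
    simp [hx0] at this
    simp [this]
  · -- essential kernel ⇒ quasi-regular
    intro hess g
    set u : Module.End R M := 1 - g * f with hu
    have huinj : Function.Injective u := by
      rw [← LinearMap.ker_eq_bot]
      apply hess
      rw [eq_bot_iff]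
      intro x hx
      obtain ⟨hf, hk⟩ := hx
      have hf' : f x = 0 := hf
      have : x - g (f x) = 0 := hk
      rw [hf'] at this
      simpa using this
    set e := LinearEquiv.ofInjective u huinj with he
    obtain ⟨h, hh⟩ := hinj (LinearMap.range u) e.symm.toLinearMap
    have key : ∀ x : M, h (u x) = x := by
      intro x
      have hm : u x ∈ LinearMap.range u := ⟨x, rfl⟩
      have h1 := hh ⟨u x, hm⟩
      have h2 : e.symm ⟨u x, hm⟩ = x := by
        rw [LinearEquiv.symm_apply_eq]
        exact Subtype.ext (by simp [he])
      simpa [h2] using h1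
    have hhinj : Function.Injective h := by
      rw [← LinearMap.ker_eq_bot]
      apply hess
      rw [eq_bot_iff]
      intro x hx
      obtain ⟨hf, hk⟩ := hx
      have hf' : f x = 0 := hf
      have hux : u x = x := by simp [hu, LinearMap.sub_apply, hf']
      have hk' : h x = 0 := hk
      have hx0 : h x = x := by
        have := key x
        rwa [hux] at this
      have : x = 0 := hx0.symm.trans hk'
      simp [this]
    refine isUnit_iff_exists.mpr ⟨h, ?_, ?_⟩
    · -- u * h = 1
      ext x
      apply hhinj
      simpa using key (h x)
    · -- h * u = 1
      ext x
      simpa using key x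
end

section
/- Let R be a ring and M a self-injective R-module whose socle soc(M) is an essential submodule of M. Then End_R(M) / rad(End_R(M)) is isomorphic as a ring to End_R(soc(M)). -/
/-- The image of an atom (simple submodule) under an endomorphism is `⊥` or an atom. -/
lemma stmt11_map_atom {R : Type*} [Ring R] {M : Type*} [AddCommGroup M] [Module R M]
    (f : Module.End R M) (P : Submodule R M) (hP : IsAtom P) :
    Submodule.map f P = ⊥ ∨ IsAtom (Submodule.map f P) := by
  by_cases hbot : Submodule.map f P = ⊥
  · exact Or.inl hbot
  · refine Or.inr ⟨hbot, fun b hb => ?_⟩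
    have hb1 : b = Submodule.map f (P ⊓ Submodule.comap f b) := by
      apply le_antisymm
      · intro y hy
        obtain ⟨x, hxP, hfx⟩ := hb.le hy
        exact ⟨x, ⟨hxP, by simp [Submodule.mem_comap, hfx, hy]⟩, hfx⟩
      · exact le_trans (Submodule.map_mono inf_le_right)
          (Submodule.map_comap_le f b)
    have : P ⊓ Submodule.comap f b = ⊥ := by
      apply hP.2
      rcases lt_or_eq_of_le (inf_le_left : P ⊓ Submodule.comap f b ≤ P) with h | h
      · exact h
      · exfalso
        have : Submodule.map f P ≤ b := by
          rw [hb1]; exact Submodule.map_mono (le_of_eq h.symm)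
        exact absurd this (not_le_of_gt hb)
    rw [hb1, this, Submodule.map_bot]

/-- Key lemma: if `M` is self-injective with essential submodule `socM`, then any
endomorphism restricting to the identity on `socM` has a left inverse which also
restricts to the identity on `socM`. -/
lemma stmt11_left_inv {R : Type*} [Ring R] {M : Type*} [AddCommGroup M] [Module R M]
    (hinj : ∀ (K : Submodule R M) (g : K →ₗ[R] M),
        ∃ h : Module.End R M, ∀ x : K, h x = g x)
    (socM : Submodule R M)
    (hess : ∀ K : Submodule R M, socM ⊓ K = ⊥ → K = ⊥)
    (k : Module.End R M) (hk : ∀ x ∈ socM, k x = x) :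
    ∃ h : Module.End R M, h * k = 1 ∧ ∀ x ∈ socM, h x = x := by
  have hker : LinearMap.ker k = ⊥ := by
    apply hess
    rw [eq_bot_iff]
    intro x hx
    have h1 : k x = x := hk x hx.1
    have h2 : k x = 0 := hx.2
    simp [h1 ▸ h2]
  have hkinj : Function.Injective k := LinearMap.ker_eq_bot.mp hker
  let e : M ≃ₗ[R] LinearMap.range k := LinearEquiv.ofInjective k hkinj
  obtain ⟨h, hh⟩ := hinj (LinearMap.range k) e.symm.toLinearMap
  have hhk : ∀ x : M, h (k x) = x := by
    intro x
    have := hh ⟨k x, ⟨x, rfl⟩⟩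
    simp only [LinearEquiv.coe_coe] at this
    rw [this, LinearEquiv.symm_apply_eq]
    exact Subtype.ext (LinearEquiv.ofInjective_apply k x).symm
  refine ⟨h, ?_, ?_⟩
  · ext x; exact hhk x
  · intro x hx
    have := hhk x
    rwa [hk x hx] at this

/-- if `M` is self-injective and its socle (the sum of all simple
submodules) is essential in `M`, then
`End_R(M)/rad(End_R(M)) ≅ End_R(soc M)` as rings. We express the isomorphism as a
surjective ring homomorphism whose kernel is the Jacobson radical. -/
theorem stmt11 {R : Type*} [Ring R] {M : Type*} [AddCommGroup M] [Module R M]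
    (hinj : ∀ (K : Submodule R M) (g : K →ₗ[R] M),
        ∃ h : Module.End R M, ∀ x : K, h x = g x)
    (socM : Submodule R M) (hsoc : socM = sSup {P : Submodule R M | IsAtom P})
    (hess : ∀ K : Submodule R M, socM ⊓ K = ⊥ → K = ⊥) :
    ∃ φ : Module.End R M →+* Module.End R socM,
      Function.Surjective φ ∧
      ∀ f : Module.End R M, φ f = 0 ↔ ∀ g : Module.End R M, IsUnit (1 - g * f) := by
  classical
  -- every endomorphism maps socM into socM
  have hmap : ∀ f : Module.End R M, ∀ x ∈ socM, f x ∈ socM := by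
    intro f
    have hle : Submodule.map f socM ≤ socM := by
      rw [hsoc, (Submodule.gc_map_comap f).l_sSup]
      apply iSup_le
      intro P
      apply iSup_le
      intro hP
      rcases stmt11_map_atom f P hP with h | h
      · rw [h]; exact bot_le
      · exact le_sSup h
    intro x hx
    exact hle ⟨x, hx, rfl⟩
  -- the restriction ring homomorphism
  refine ⟨{ toFun := fun f => f.restrict (hmap f),
            map_one' := by ext x; rfl,
            map_mul' := by intro f g; ext x; rfl,
            map_zero' := by ext x; rfl,
            map_add' := by intro f g; ext x; rfl }, ?_, ?_⟩
  · -- surjectivity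
    intro u
    obtain ⟨h, hh⟩ := hinj socM (socM.subtype.comp u)
    refine ⟨h, ?_⟩
    ext x
    have h1 := hh x
    simp only [LinearMap.coe_comp, Function.comp_apply, Submodule.coe_subtype] at h1
    simpa [LinearMap.restrict_coe_apply] using h1
  · -- kernel characterization
    intro f
    simp only [RingHom.coe_mk, MonoidHom.coe_mk, OneHom.coe_mk]
    have hres : f.restrict (hmap f) = 0 ↔ ∀ x ∈ socM, f x = 0 := by
      constructor
      · intro h0 x hx
        have := congrArg (fun u : Module.End R socM => ((u ⟨x, hx⟩ : socM) : M)) h0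
        simpa [LinearMap.restrict_apply] using this
      · intro h0
        ext x
        simpa [LinearMap.restrict_apply] using h0 x x.2
    rw [hres]
    constructor
    · -- f vanishes on socM → 1 - g f is a unit for all g
      intro h0 g
      set k : Module.End R M := 1 - g * f with hkdef
      have hkid : ∀ x ∈ socM, k x = x := by
        intro x hx
        simp [hkdef, LinearMap.sub_apply, Module.End.mul_apply, h0 x hx]
      obtain ⟨h, hh1, hh2⟩ := stmt11_left_inv hinj socM hess k hkid
      obtain ⟨h', hh'1, _⟩ := stmt11_left_inv hinj socM hess h hh2
      have hk' : h' = k := by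
        calc h' = h' * (h * k) := by rw [hh1, mul_one]
        _ = (h' * h) * k := by rw [mul_assoc]
        _ = k := by rw [hh'1, one_mul]
      exact ⟨⟨k, h, hk' ▸ hh'1, hh1⟩, rfl⟩
    · -- 1 - g f always a unit → f vanishes on socM
      intro hu
      have hle : socM ≤ LinearMap.ker f := by
        rw [hsoc]
        apply sSup_le
        intro P hP
        by_contra hPker
        -- f is injective on P
        have hinjP : Function.Injective (f.domRestrict P) := by
          rw [← LinearMap.ker_eq_bot]
          rw [eq_bot_iff]
          rintro ⟨x, hxP⟩ hx
          have hxker : x ∈ P ⊓ LinearMap.ker f := ⟨hxP, hx⟩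
          have hPK : P ⊓ LinearMap.ker f = ⊥ := by
            apply hP.2
            rcases lt_or_eq_of_le (inf_le_left : P ⊓ LinearMap.ker f ≤ P) with h | h
            · exact h
            · exact absurd (h ▸ (inf_le_right : P ⊓ LinearMap.ker f ≤ LinearMap.ker f))
                hPker
          rw [hPK] at hxker
          exact Subtype.ext (by simpa using hxker)
        let e : P ≃ₗ[R] LinearMap.range (f.domRestrict P) :=
          LinearEquiv.ofInjective (f.domRestrict P) hinjP
        obtain ⟨g, hg⟩ := hinj (LinearMap.range (f.domRestrict P))
          (P.subtype.comp e.symm.toLinearMap)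
        have hgf : ∀ p : P, g (f p) = p := by
          intro p
          have := hg ⟨f p, ⟨p, rfl⟩⟩
          simp only [LinearMap.coe_comp, Function.comp_apply, Submodule.coe_subtype,
            LinearEquiv.coe_coe] at this
          rw [this]
          congr 1
          rw [LinearEquiv.symm_apply_eq]
          exact Subtype.ext (LinearEquiv.ofInjective_apply (f.domRestrict P) p).symm
        -- get a nonzero element of P killed by 1 - g f
        obtain ⟨p, hpP, hp0⟩ := Submodule.exists_mem_ne_zero_of_ne_bot hP.1
        have hkill : (1 - g * f) p = 0 := by
          simp [LinearMap.sub_apply, Module.End.mul_apply, hgf ⟨p, hpP⟩]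
        obtain ⟨u, huu⟩ := hu g
        have this' : Function.Injective ((1 - g * f : Module.End R M) : M → M) := by
          intro a b hab
          have h2 : ((u⁻¹ : (Module.End R M)ˣ) : Module.End R M) ((1 - g * f) a)
              = ((u⁻¹ : (Module.End R M)ˣ) : Module.End R M) ((1 - g * f) b) := by
            rw [hab]
          rwa [← Module.End.mul_apply, ← Module.End.mul_apply, ← huu, u.inv_mul,
            Module.End.one_apply, Module.End.one_apply] at h2
        exact hp0 (this' (by simpa using hkill))
      intro x hx
      exact hle hx
end

section
/- Let R₁ and R₂ be rings, and let F : Mod-R₁ → Mod-R₂ and G : Mod-R₂ → Mod-R₁ be an exact adjoint pair with F left adjoint to G. If M is an R₁-module, N is an R₂-module, and M is G(N)-projective, then F(M) is N-projective. -/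
open CategoryTheory CategoryTheory.Limits

/-- for an exact adjoint pair `F ⊣ G` between module categories,
if `M` is `G(N)`-projective then `F(M)` is `N`-projective. -/
theorem stmt12 {R₁ R₂ : Type} [Ring R₁] [Ring R₂]
    (F : ModuleCat R₁ ⥤ ModuleCat R₂) (G : ModuleCat R₂ ⥤ ModuleCat R₁)
    (adj : F ⊣ G)
    [PreservesFiniteLimits F] [PreservesFiniteColimits F]
    [PreservesFiniteLimits G] [PreservesFiniteColimits G]
    (M : ModuleCat R₁) (N : ModuleCat R₂)
    (hM : ∀ (K : ModuleCat R₁) (p : G.obj N ⟶ K), Epi p →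
        ∀ f : M ⟶ K, ∃ h : M ⟶ G.obj N, h ≫ p = f) :
    ∀ (K : ModuleCat R₂) (p : N ⟶ K), Epi p →
        ∀ f : F.obj M ⟶ K, ∃ h : F.obj M ⟶ N, h ≫ p = f := by
  intro K p hp f
  have hGp : Epi (G.map p) := by
    have : G.PreservesEpimorphisms := inferInstance
    exact this.preserves p
  obtain ⟨h, hh⟩ := hM (G.obj K) (G.map p) hGp (adj.homEquiv M K f)
  refine ⟨(adj.homEquiv M N).symm h, ?_⟩
  apply (adj.homEquiv M K).injective
  rw [Adjunction.homEquiv_naturality_right, Equiv.apply_symm_apply, hh]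
end

section
/- Let R₁ and R₂ be rings, and let F : Mod-R₁ → Mod-R₂ and G : Mod-R₂ → Mod-R₁ be an exact adjoint pair with F left adjoint to G. If M is an R₂-module, N is an R₁-module, and M is F(N)-injective, then G(M) is N-injective. -/
open CategoryTheory CategoryTheory.Limits

/-- for an exact adjoint pair `F ⊣ G` between module categories,
if `M` is `F(N)`-injective then `G(M)` is `N`-injective. -/
theorem stmt13 {R₁ R₂ : Type} [Ring R₁] [Ring R₂]
    (F : ModuleCat R₁ ⥤ ModuleCat R₂) (G : ModuleCat R₂ ⥤ ModuleCat R₁)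
    (adj : F ⊣ G)
    [PreservesFiniteLimits F] [PreservesFiniteColimits F]
    [PreservesFiniteLimits G] [PreservesFiniteColimits G]
    (M : ModuleCat R₂) (N : ModuleCat R₁)
    (hM : ∀ (K : ModuleCat R₂) (i : K ⟶ F.obj N), Mono i →
        ∀ g : K ⟶ M, ∃ h : F.obj N ⟶ M, i ≫ h = g) :
    ∀ (K : ModuleCat R₁) (i : K ⟶ N), Mono i →
        ∀ g : K ⟶ G.obj M, ∃ h : N ⟶ G.obj M, i ≫ h = g := by
  intro K i hi g
  haveI : Mono (F.map i) := F.map_mono i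
  obtain ⟨h', hh'⟩ := hM (F.obj K) (F.map i) inferInstance ((adj.homEquiv K M).symm g)
  refine ⟨adj.homEquiv N M h', ?_⟩
  rw [← Adjunction.homEquiv_naturality_left, hh', Equiv.apply_symm_apply]
end

section
/- Let F be an algebraically closed field, G a finitely generated group, and ρ a finite-dimensional representation of G over F. If End_{F[G]}(ρ) is commutative and ρ is a self-injective F[G]-module, then for every irreducible representation π of G over F, dim_F Hom_{F[G]}(π, ρ) ≤ 1. -/
/-!
A nonzero `f : W → V` is injective, and self-injectivity of `V` factors every `g : W → V` as
`h ∘ f` with `h ∈ End V`. If `range g ⊄ range f`, the two simple images are disjoint; extending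
the projection of `range f ⊕ range g` onto `range f` to some `e ∈ End V` gives
`g = h e f = e h f = e g = 0` by commutativity. So `range g ≤ range f`, and Schur's lemma on the
simple, finite-dimensional module `range f` gives `g = c • f`.
-/

open LinearMap

def Module.IsSelfInjective (R V : Type*) [Semiring R] [AddCommMonoid V] [Module R V] : Prop :=
  ∀ (K : Submodule R V) (g : K →ₗ[R] V), ∃ h : Module.End R V, ∀ x : K, h x = g x

namespace Module.IsSelfInjective

variable {R V W : Type*} [Ring R] [AddCommGroup V] [Module R V] [AddCommGroup W] [Module R W]

theorem exists_comp_eq (hV : IsSelfInjective R V) {f : W →ₗ[R] V} (hf : Function.Injective f)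
    (g : W →ₗ[R] V) : ∃ h : Module.End R V, h ∘ₗ f = g := by
  let e := LinearEquiv.ofInjective f hf
  obtain ⟨h, hh⟩ := hV (range f) (g ∘ₗ e.symm.toLinearMap)
  refine ⟨h, LinearMap.ext fun w => ?_⟩
  simpa [e] using hh (e w)

theorem exists_end_eqOn_of_disjoint (hV : IsSelfInjective R V) {p q : Submodule R V}
    (hpq : Disjoint p q) :
    ∃ e : Module.End R V, (∀ x ∈ p, e x = x) ∧ ∀ x ∈ q, e x = 0 := by
  let φ := LinearPMap.sup ⟨p, p.subtype⟩ ⟨q, 0⟩ (LinearPMap.sup_h_of_disjoint _ _ hpq)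
  obtain ⟨e, he⟩ := hV φ.domain φ.toFun
  refine ⟨e, fun x hx => ?_, fun x hx => ?_⟩
  · have hxφ : x ∈ φ.domain := Submodule.mem_sup_left hx
    rw [he ⟨x, hxφ⟩]
    exact (LinearPMap.sup_apply _ ⟨x, hx⟩ ⟨0, q.zero_mem⟩ ⟨x, hxφ⟩ (add_zero x)).trans (add_zero x)
  · have hxφ : x ∈ φ.domain := Submodule.mem_sup_right hx
    rw [he ⟨x, hxφ⟩]
    exact (LinearPMap.sup_apply _ ⟨0, p.zero_mem⟩ ⟨x, hx⟩ ⟨x, hxφ⟩ (zero_add x)).trans (add_zero 0)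

theorem eq_zero_of_disjoint_range (hV : IsSelfInjective R V)
    (hcomm : ∀ a b : Module.End R V, a * b = b * a) {f g : W →ₗ[R] V}
    (hf : Function.Injective f) (hfg : Disjoint (range f) (range g)) : g = 0 := by
  obtain ⟨h, rfl⟩ := hV.exists_comp_eq hf g
  obtain ⟨e, he_id, he_zero⟩ := hV.exists_end_eqOn_of_disjoint hfg
  ext w
  calc h (f w) = (h * e) (f w) := by rw [Module.End.mul_apply, he_id _ (mem_range_self f w)]
    _ = (e * h) (f w) := by rw [hcomm]
    _ = 0 := he_zero _ (mem_range_self (h ∘ₗ f) w)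

theorem range_le_range [IsSimpleModule R W] (hV : IsSelfInjective R V)
    (hcomm : ∀ a b : Module.End R V, a * b = b * a) {f g : W →ₗ[R] V}
    (hf : Function.Injective f) : range g ≤ range f := by
  rcases g.injective_or_eq_zero with hg | rfl
  · have hg_simple : IsSimpleModule R (range g) :=
      IsSimpleModule.congr (LinearEquiv.ofInjective g hg).symm
    by_contra hle
    have hg_zero := hV.eq_zero_of_disjoint_range hcomm hf
      ((isSimpleModule_iff_isAtom.mp hg_simple).not_le_iff_disjoint.mp hle).symm
    exact hle (by simp [hg_zero])
  · simp

end Module.IsSelfInjective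

theorem LinearMap.exists_apply_eq_smul_of_range_le {F R W V : Type*} [Field F] [IsAlgClosed F]
    [Ring R] [Algebra F R] [AddCommGroup W] [Module R W] [IsSimpleModule R W]
    [AddCommGroup V] [Module R V] [Module F V] [IsScalarTower F R V] [FiniteDimensional F V]
    {f g : W →ₗ[R] V} (hf : Function.Injective f) (hgf : range g ≤ range f) :
    ∃ c : F, ∀ w, g w = c • f w := by
  let e := LinearEquiv.ofInjective f hf
  have : IsSimpleModule R (range f) := IsSimpleModule.congr e.symm
  have : FiniteDimensional F (range f) :=
    FiniteDimensional.finiteDimensional_submodule ((range f).restrictScalars F)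
  obtain ⟨c, hc⟩ := (IsSimpleModule.algebraMap_end_bijective_of_isAlgClosed F).2
    (codRestrict _ g (fun w => hgf (mem_range_self g w)) ∘ₗ e.symm.toLinearMap)
  refine ⟨c, fun w => ?_⟩
  simpa [e] using (congrArg Subtype.val (LinearMap.congr_fun hc (e w))).symm

theorem stmt16_general {F : Type*} [Field F] [IsAlgClosed F]
    {G : Type*} [Group G]
    (V : Type*) [AddCommGroup V] [Module (MonoidAlgebra F G) V]
    [Module F V] [IsScalarTower F (MonoidAlgebra F G) V]
    [SMulCommClass (MonoidAlgebra F G) F V]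
    [FiniteDimensional F V]
    (hcomm : ∀ f g : Module.End (MonoidAlgebra F G) V, f * g = g * f)
    (hinj : ∀ (K : Submodule (MonoidAlgebra F G) V) (g : K →ₗ[MonoidAlgebra F G] V),
        ∃ h : Module.End (MonoidAlgebra F G) V, ∀ x : K, h x = g x) :
    ∀ (W : Type _) [AddCommGroup W] [Module (MonoidAlgebra F G) W],
      IsSimpleModule (MonoidAlgebra F G) W →
      Module.rank F (W →ₗ[MonoidAlgebra F G] V) ≤ 1 := by
  intro W _ _ _
  rw [rank_le_one_iff]
  by_cases hW : ∃ f : W →ₗ[MonoidAlgebra F G] V, f ≠ 0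
  · obtain ⟨f, hf⟩ := hW
    have hf_inj := injective_of_ne_zero hf
    refine ⟨f, fun g => ?_⟩
    obtain ⟨c, hc⟩ := exists_apply_eq_smul_of_range_le (F := F) hf_inj
      (Module.IsSelfInjective.range_le_range hinj hcomm hf_inj)
    exact ⟨c, LinearMap.ext fun w => (hc w).symm⟩
  · push Not at hW
    exact ⟨0, fun g => ⟨0, by simp [hW g]⟩⟩

/-- let `F` be an algebraically closed field, `G` a finitely
generated group, and `V` a finite-dimensional representation of `G` over `F`
(i.e. an `F[G]`-module). If `End_{F[G]}(V)` is commutative and `V` is a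
self-injective `F[G]`-module, then `dim_F Hom_{F[G]}(W, V) ≤ 1` for every
irreducible representation `W` of `G` over `F`. -/
theorem stmt16 {F : Type*} [Field F] [IsAlgClosed F]
    {G : Type*} [Group G] [Group.FG G]
    (V : Type*) [AddCommGroup V] [Module (MonoidAlgebra F G) V]
    [Module F V] [IsScalarTower F (MonoidAlgebra F G) V]
    [SMulCommClass (MonoidAlgebra F G) F V]
    [FiniteDimensional F V]
    (hcomm : ∀ f g : Module.End (MonoidAlgebra F G) V, f * g = g * f)
    (hinj : ∀ (K : Submodule (MonoidAlgebra F G) V) (g : K →ₗ[MonoidAlgebra F G] V),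
        ∃ h : Module.End (MonoidAlgebra F G) V, ∀ x : K, h x = g x) :
    ∀ (W : Type _) [AddCommGroup W] [Module (MonoidAlgebra F G) W],
      IsSimpleModule (MonoidAlgebra F G) W →
      Module.rank F (W →ₗ[MonoidAlgebra F G] V) ≤ 1 :=
  stmt16_general V hcomm hinj
end
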